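/- Let F = {0 (constant), big (constant), s (arity 1), inf (arity 1), cons (arity 2)} and let R be the rewrite system {cons(x, cons(y,z)) → big, inf(x) → cons(x, inf(s(x)))}. Then every ground term of T(F) outermost terminates, i.e., there is no infinite sequence of outermost rewrite steps starting from any ground term. -/

import Mathlib

/-!
Every `inf(u)` is a redex, so an outermost step never rewrites inside it. When it is the second
argument of a `cons`, unfolding it creates the redex `cons(a, cons(u, ..))`, which then collapses
to the constant `big`; such an `inf` can therefore be charged a constant whatever `u` is. The
resulting `weight` decreases strictly along outermost steps between well-formed terms, and
rewriting preserves well-formedness.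
-/

namespace TRS

inductive Term (F V : Type*) where
  | var : V → Term F V
  | app : F → List (Term F V) → Term F V

namespace Term

variable {F V : Type*}

mutual
  def subst (σ : V → Term F V) : Term F V → Term F V
    | .var x => σ x
    | .app f ts => .app f (substList σ ts)

  def substList (σ : V → Term F V) : List (Term F V) → List (Term F V)
    | [] => []
    | t :: ts => subst σ t :: substList σ ts
end

mutual
  def vars : Term F V → Set V
    | .var x => {x}
    | .app _ ts => varsList ts

  def varsList : List (Term F V) → Set V
    | [] => ∅
    | t :: ts => vars t ∪ varsList ts
end

def IsGround (t : Term F V) : Prop := vars t = ∅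

def top : Term F V → Option F
  | .var _ => none
  | .app f _ => some f

def subtermAt : List ℕ → Term F V → Option (Term F V)
  | [], t => some t
  | _ :: _, .var _ => none
  | i :: p, .app _ ts =>
    match ts[i]? with
    | none => none
    | some u => subtermAt p u

def replaceAt : List ℕ → Term F V → Term F V → Option (Term F V)
  | [], _, u => some u
  | _ :: _, .var _, _ => none
  | i :: p, .app f ts, u =>
    match ts[i]? with
    | none => none
    | some ti =>
      match replaceAt p ti u with
      | none => none
      | some ti' => some (.app f (ts.set i ti'))

inductive WF (arity : F → ℕ) : Term F V → Prop
  | var (x : V) : WF arity (.var x)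
  | app (f : F) (ts : List (Term F V)) :
      ts.length = arity f → (∀ t ∈ ts, WF arity t) → WF arity (.app f ts)

inductive Occurs (f : F) : Term F V → Prop
  | head (ts : List (Term F V)) : Occurs f (.app f ts)
  | arg {g : F} {ts : List (Term F V)} {t : Term F V} :
      t ∈ ts → Occurs f t → Occurs f (.app g ts)

end Term

open Term

structure Rule (F V : Type*) where
  lhs : Term F V
  rhs : Term F V

variable {F V : Type*}

/-- The domain of a substitution. -/
def SDom (σ : V → Term F V) : Set V := {x | σ x ≠ Term.var x}

/-- The range (variables) of a substitution. -/
def SRan (σ : V → Term F V) : Set V := ⋃ x ∈ SDom σ, vars (σ x)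

/-- A ground substitution maps every variable of its domain to a ground term. -/
def GroundSubst (σ : V → Term F V) : Prop := ∀ x ∈ SDom σ, IsGround (σ x)

/-- `R` is a rewrite system: no left-hand side is a variable, and
`Var(rhs) ⊆ Var(lhs)` for every rule. -/
def IsRS (R : List (Rule F V)) : Prop :=
  ∀ ρ ∈ R, (∀ x : V, ρ.lhs ≠ Term.var x) ∧ vars ρ.rhs ⊆ vars ρ.lhs

/-- Rewriting at position `p` with the rule `l → r`. -/
def RewriteAtWith (l r : Term F V) (p : List ℕ) (s t : Term F V) : Prop :=
  ∃ τ : V → Term F V, subtermAt p s = some (subst τ l) ∧ replaceAt p s (subst τ r) = some t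

/-- Rewriting at position `p` with some rule of `R`. -/
def RewriteAt (R : List (Rule F V)) (p : List ℕ) (s t : Term F V) : Prop :=
  ∃ ρ ∈ R, RewriteAtWith ρ.lhs ρ.rhs p s t

/-- The rewriting relation induced by `R`. -/
def Rewrite (R : List (Rule F V)) (s t : Term F V) : Prop :=
  ∃ p, RewriteAt R p s t

def ReducibleAt (R : List (Rule F V)) (s : Term F V) (p : List ℕ) : Prop :=
  ∃ t, RewriteAt R p s t

def Reducible (R : List (Rule F V)) (s : Term F V) : Prop :=
  ∃ t, Rewrite R s t

def NormalForm (R : List (Rule F V)) (s : Term F V) : Prop := ¬ Reducible R s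

/-- `n` is a normal form of `s`. -/
def IsNormalFormOf (R : List (Rule F V)) (s n : Term F V) : Prop :=
  Relation.ReflTransGen (Rewrite R) s n ∧ NormalForm R n

/-- `q` is strictly below `p` (`p` is a strict prefix of `q`). -/
def StrictBelow (p q : List ℕ) : Prop := p <+: q ∧ p ≠ q

/-- Innermost rewrite step at position `p`. -/
def InnAt (R : List (Rule F V)) (p : List ℕ) (s t : Term F V) : Prop :=
  RewriteAt R p s t ∧ ∀ q, StrictBelow p q → ¬ ReducibleAt R s q

def InnStep (R : List (Rule F V)) (s t : Term F V) : Prop := ∃ p, InnAt R p s t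

/-- Outermost rewrite step at position `p`. -/
def OutAt (R : List (Rule F V)) (p : List ℕ) (s t : Term F V) : Prop :=
  RewriteAt R p s t ∧ ∀ q, StrictBelow q p → ¬ ReducibleAt R s q

def OutStep (R : List (Rule F V)) (s t : Term F V) : Prop := ∃ p, OutAt R p s t

/-- Innermost rewrite step at position `p` with rule `l → r`. -/
def InnAtWith (R : List (Rule F V)) (l r : Term F V) (p : List ℕ) (s t : Term F V) : Prop :=
  RewriteAtWith l r p s t ∧ ∀ q, StrictBelow p q → ¬ ReducibleAt R s q

/-- Outermost rewrite step at position `p` with rule `l → r`. -/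
def OutAtWith (R : List (Rule F V)) (l r : Term F V) (p : List ℕ) (s t : Term F V) : Prop :=
  RewriteAtWith l r p s t ∧ ∀ q, StrictBelow q p → ¬ ReducibleAt R s q

/-- No infinite innermost derivation starts from `t`. -/
def InnTerminates (R : List (Rule F V)) (t : Term F V) : Prop :=
  ¬ ∃ f : ℕ → Term F V, f 0 = t ∧ ∀ n, InnStep R (f n) (f (n + 1))

/-- No infinite outermost derivation starts from `t`. -/
def OutTerminates (R : List (Rule F V)) (t : Term F V) : Prop :=
  ¬ ∃ f : ℕ → Term F V, f 0 = t ∧ ∀ n, OutStep R (f n) (f (n + 1))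

def Unifies (σ : V → Term F V) (u v : Term F V) : Prop := subst σ u = subst σ v

/-- `σ` is a most general unifier of `u` and `v`. -/
def IsMGU (u v : Term F V) (σ : V → Term F V) : Prop :=
  Unifies σ u v ∧
    ∀ τ : V → Term F V, Unifies τ u v → ∃ ρ : V → Term F V, ∀ x, subst ρ (σ x) = τ x

/-- The usable rules of a term (least set closed under the defining equations). -/
inductive Usable (R : List (Rule F V)) (XA : Set V) : Term F V → Rule F V → Prop
  | var {x : V} {ρ : Rule F V} : x ∉ XA → ρ ∈ R → Usable R XA (Term.var x) ρ
  | rls {f : F} {ts : List (Term F V)} {ρ : Rule F V} :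
      ρ ∈ R → Term.top ρ.lhs = some f → Usable R XA (Term.app f ts) ρ
  | arg {f : F} {ts : List (Term F V)} {t : Term F V} {ρ : Rule F V} :
      t ∈ ts → Usable R XA t ρ → Usable R XA (Term.app f ts) ρ
  | rhs {f : F} {ts : List (Term F V)} {ρ' ρ : Rule F V} :
      ρ' ∈ R → Term.top ρ'.lhs = some f → Usable R XA ρ'.rhs ρ → Usable R XA (Term.app f ts) ρ

/-- The signature F = {0, big, s:1, inf:1, cons:2}. -/
inductive F17 : Type
  | zero | big | s | inf | cons

def arity17 : F17 → ℕ
  | .zero => 0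
  | .big => 0
  | .s => 1
  | .inf => 1
  | .cons => 2

/-- The system {cons(x, cons(y,z)) → big, inf(x) → cons(x, inf(s(x)))}. -/
def R17 : List (Rule F17 ℕ) :=
  [ ⟨.app .cons [.var 0, .app .cons [.var 1, .var 2]], .app .big []⟩,
    ⟨.app .inf [.var 0], .app .cons [.var 0, .app .inf [.app .s [.var 0]]]⟩ ]

namespace Term

theorem subtermAt_cons (i : ℕ) (p : List ℕ) (f : F) (ts : List (Term F V)) :
    subtermAt (i :: p) (app f ts) = ts[i]?.bind (subtermAt p) := by
  simp only [subtermAt]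
  cases ts[i]? <;> rfl

theorem replaceAt_cons (i : ℕ) (p : List ℕ) (f : F) (ts : List (Term F V)) (u : Term F V) :
    replaceAt (i :: p) (app f ts) u =
      ts[i]?.bind fun ti => (replaceAt p ti u).map fun ti' => app f (ts.set i ti') := by
  simp only [replaceAt]
  cases ts[i]? with
  | none => rfl
  | some ti => simp only [Option.bind_some]; cases replaceAt p ti u <;> rfl

theorem WF.length_eq {arity : F → ℕ} {f : F} {ts : List (Term F V)} (h : WF arity (.app f ts)) :
    ts.length = arity f := by
  cases h with | app _ _ hlen _ => exact hlen

theorem WF.of_mem {arity : F → ℕ} {f : F} {ts : List (Term F V)} {t : Term F V}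
    (h : WF arity (.app f ts)) (ht : t ∈ ts) : WF arity t := by
  cases h with | app _ _ _ hts => exact hts t ht

end Term

section Rewriting

variable {R : List (Rule F V)}

theorem rewriteAt_nil_iff {s t : Term F V} :
    RewriteAt R [] s t ↔ ∃ ρ ∈ R, ∃ τ, s = subst τ ρ.lhs ∧ t = subst τ ρ.rhs := by
  simp [RewriteAt, RewriteAtWith, subtermAt, replaceAt, eq_comm]

theorem not_rewriteAt_cons_var (i : ℕ) (q : List ℕ) (x : V) (t : Term F V) :
    ¬ RewriteAt R (i :: q) (var x) t := by
  simp [RewriteAt, RewriteAtWith, subtermAt]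

theorem rewriteAt_cons_iff {i : ℕ} {q : List ℕ} {f : F} {ts : List (Term F V)} {t : Term F V} :
    RewriteAt R (i :: q) (app f ts) t ↔
      ∃ ti ti', ts[i]? = some ti ∧ RewriteAt R q ti ti' ∧ t = app f (ts.set i ti') := by
  simp only [RewriteAt, RewriteAtWith, subtermAt_cons, replaceAt_cons, Option.bind_eq_some_iff,
    Option.map_eq_some_iff]
  constructor
  · rintro ⟨ρ, hρ, τ, ⟨ti, hi, hsub⟩, ⟨_, hi', ti', hrep, rfl⟩⟩
    obtain rfl := hi.symm.trans hi' |> Option.some_inj.mp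
    exact ⟨ti, ti', hi, ⟨ρ, hρ, τ, hsub, hrep⟩, rfl⟩
  · rintro ⟨ti, ti', hi, ⟨ρ, hρ, τ, hsub, hrep⟩, rfl⟩
    exact ⟨ρ, hρ, τ, ⟨ti, hi, hsub⟩, ⟨ti, hi, ti', hrep, rfl⟩⟩

theorem OutAt.of_cons {i : ℕ} {q : List ℕ} {f : F} {ts : List (Term F V)} {t : Term F V}
    (h : OutAt R (i :: q) (app f ts) t) :
    ∃ ti ti', ts[i]? = some ti ∧ OutAt R q ti ti' ∧ t = app f (ts.set i ti') ∧
      ¬ ReducibleAt R (app f ts) [] := by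
  obtain ⟨hrw, hout⟩ := h
  obtain ⟨ti, ti', hi, hrw', rfl⟩ := rewriteAt_cons_iff.mp hrw
  refine ⟨ti, ti', hi, ⟨hrw', fun q' hq' ⟨u, hu⟩ => ?_⟩, rfl,
    hout [] ⟨List.nil_prefix, List.cons_ne_nil i q |>.symm⟩⟩
  exact hout (i :: q') ⟨List.cons_prefix_cons.mpr ⟨rfl, hq'.1⟩, by simpa using hq'.2⟩
    ⟨_, rewriteAt_cons_iff.mpr ⟨ti, u, hi, hu, rfl⟩⟩

theorem Term.WF.rewriteAt {arity : F → ℕ}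
    (hroot : ∀ {s t : Term F V}, WF arity s → RewriteAt R [] s t → WF arity t) :
    ∀ {p : List ℕ} {s t : Term F V}, WF arity s → RewriteAt R p s t → WF arity t
  | [], _, _, hs, h => hroot hs h
  | i :: q, .var x, _, _, h => (not_rewriteAt_cons_var i q x _ h).elim
  | i :: q, .app f ts, _, .app _ _ hlen hts, h => by
    obtain ⟨ti, ti', hi, h', rfl⟩ := rewriteAt_cons_iff.mp h
    have hti' : WF arity ti' := Term.WF.rewriteAt hroot (hts ti (List.mem_of_getElem? hi)) h'
    refine .app f _ (by simpa using hlen) fun u hu => ?_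
    rcases List.mem_or_eq_of_mem_set hu with hu | rfl
    exacts [hts u hu, hti']

theorem outTerminates_of_measure (P : Term F V → Prop) (m : Term F V → ℕ)
    (hP : ∀ s t, P s → OutStep R s t → P t) (hm : ∀ s t, P s → OutStep R s t → m t < m s)
    {t : Term F V} (ht : P t) : OutTerminates R t := by
  rintro ⟨f, rfl, hf⟩
  have hPf : ∀ n, P (f n) := fun n => by
    induction n with
    | zero => exact ht
    | succ n ih => exact hP _ _ ih (hf n)
  obtain ⟨n, hn⟩ := WellFounded.not_rel_apply_succ (r := (· < ·)) (m ∘ f)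
  exact hn (hm _ _ (hPf n) (hf n))

end Rewriting

theorem rewriteAt_nil_R17 {s t : Term F17 ℕ} (h : RewriteAt R17 [] s t) :
    (∃ a b c, s = app .cons [a, app .cons [b, c]] ∧ t = app .big []) ∨
      ∃ x, s = app .inf [x] ∧ t = app .cons [x, app .inf [app .s [x]]] := by
  obtain ⟨ρ, hρ, τ, rfl, rfl⟩ := rewriteAt_nil_iff.mp h
  simp only [R17, List.mem_cons, List.not_mem_nil, or_false] at hρ
  rcases hρ with rfl | rfl
  · exact .inl ⟨τ 0, τ 1, τ 2, rfl, rfl⟩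
  · exact .inr ⟨τ 0, rfl, rfl⟩

theorem reducibleAt_nil_inf (u : Term F17 ℕ) : ReducibleAt R17 (app .inf [u]) [] :=
  ⟨_, rewriteAt_nil_iff.mpr ⟨R17[1], by simp [R17], fun _ => u, rfl, rfl⟩⟩

theorem reducibleAt_nil_cons_cons (a b c : Term F17 ℕ) :
    ReducibleAt R17 (app .cons [a, app .cons [b, c]]) [] :=
  ⟨_, rewriteAt_nil_iff.mpr ⟨R17[0], by simp [R17], ![a, b, c] ∘ Fin.ofNat 3, rfl, rfl⟩⟩

theorem wf_of_rewriteAt_nil_R17 {s t : Term F17 ℕ} (hs : WF arity17 s)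
    (h : RewriteAt R17 [] s t) : WF arity17 t := by
  rcases rewriteAt_nil_R17 h with ⟨a, b, c, rfl, rfl⟩ | ⟨x, rfl, rfl⟩
  · exact .app _ _ rfl (by simp)
  · have hx : WF arity17 x := hs.of_mem (by simp)
    refine .app _ _ rfl ?_
    simp only [List.mem_cons, List.not_mem_nil, or_false, forall_eq_or_imp, forall_eq]
    exact ⟨hx, .app _ _ rfl (by simpa using .app _ _ rfl (by simpa using hx))⟩

def weight : Term F17 ℕ → ℕ
  | .app .s [u] => weight u
  | .app .inf [u] => weight u + 3
  | .app .cons [_, .app .cons _] => 1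
  | .app .cons [a, .app .inf _] => weight a + 2
  | .app .cons [a, b] => weight a + weight b
  | _ => 0

theorem weight_lt_of_rewriteAt_nil {s t : Term F17 ℕ} (h : RewriteAt R17 [] s t) :
    weight t < weight s := by
  rcases rewriteAt_nil_R17 h with ⟨a, b, c, rfl, rfl⟩ | ⟨x, rfl, rfl⟩ <;> simp [weight]

theorem weight_cons_app {g : F17} (hcons : g ≠ .cons) (hinf : g ≠ .inf) (a : Term F17 ℕ)
    (l : List (Term F17 ℕ)) : weight (app .cons [a, app g l]) = weight a + weight (app g l) := by
  cases g <;> simp_all [weight]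

theorem weight_cons_left_lt {a a' b : Term F17 ℕ} (hb : ∀ l, b ≠ app .cons l)
    (h : weight a' < weight a) : weight (app .cons [a', b]) < weight (app .cons [a, b]) := by
  rcases b with x | ⟨g, l⟩
  · simpa [weight] using h
  · by_cases hinf : g = .inf
    · subst hinf; simpa [weight] using h
    · have hcons : g ≠ .cons := by rintro rfl; exact hb l rfl
      simpa [weight_cons_app hcons hinf] using h

theorem weight_cons_right_lt {a b b' : Term F17 ℕ} {q : List ℕ} (hb : WF arity17 b)
    (hbc : ∀ l, b ≠ app .cons l) (hstep : OutAt R17 q b b') (hlt : weight b' < weight b) :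
    weight (app .cons [a, b']) < weight (app .cons [a, b]) := by
  rcases q with _ | ⟨j, q⟩
  · rcases rewriteAt_nil_R17 hstep.1 with ⟨_, _, _, rfl, -⟩ | ⟨x, rfl, rfl⟩
    · exact absurd rfl (hbc _)
    · simp [weight]
  · rcases b with x | ⟨g, l⟩
    · exact absurd hstep.1 (not_rewriteAt_cons_var _ _ _ _)
    · obtain ⟨_, _, _, _, rfl, hroot⟩ := hstep.of_cons
      have hcons : g ≠ .cons := by rintro rfl; exact hbc l rfl
      have hinf : g ≠ .inf := by
        rintro rfl
        obtain ⟨u, rfl⟩ := List.length_eq_one_iff.mp hb.length_eq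
        exact hroot (reducibleAt_nil_inf u)
      rw [weight_cons_app hcons hinf, weight_cons_app hcons hinf]
      omega

theorem weight_app_set_lt {f : F17} {ts : List (Term F17 ℕ)} {i : ℕ} {q : List ℕ}
    {ti ti' : Term F17 ℕ} (hwf : WF arity17 (app f ts)) (hroot : ¬ ReducibleAt R17 (app f ts) [])
    (hi : ts[i]? = some ti) (hstep : OutAt R17 q ti ti') (hlt : weight ti' < weight ti) :
    weight (app f (ts.set i ti')) < weight (app f ts) := by
  have hlen := hwf.length_eq
  cases f
  case zero | big => simp_all [arity17]
  case s =>
    obtain ⟨u, rfl⟩ := List.length_eq_one_iff.mp hlen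
    rcases i with _ | i
    · obtain rfl := Option.some.inj hi
      simpa [weight] using hlt
    · simp at hi
  case inf =>
    obtain ⟨u, rfl⟩ := List.length_eq_one_iff.mp hlen
    exact absurd (reducibleAt_nil_inf u) hroot
  case cons =>
    obtain ⟨a, b, rfl⟩ := List.length_eq_two.mp hlen
    have hbwf : WF arity17 b := hwf.of_mem (by simp)
    have hb : ∀ l, b ≠ app .cons l := by
      rintro l rfl
      obtain ⟨c, d, rfl⟩ := List.length_eq_two.mp hbwf.length_eq
      exact hroot (reducibleAt_nil_cons_cons a c d)
    rcases i with _ | _ | i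
    · obtain rfl := Option.some.inj hi
      exact weight_cons_left_lt hb hlt
    · obtain rfl := Option.some.inj hi
      exact weight_cons_right_lt hbwf hb hstep hlt
    · simp at hi

theorem weight_lt_of_outAt :
    ∀ {p : List ℕ} {s t : Term F17 ℕ}, WF arity17 s → OutAt R17 p s t → weight t < weight s
  | [], _, _, _, h => weight_lt_of_rewriteAt_nil h.1
  | i :: q, .var x, _, _, h => (not_rewriteAt_cons_var i q x _ h.1).elim
  | _ :: _, .app _ _, _, hs, h => by
    obtain ⟨ti, ti', hi, hstep, rfl, hroot⟩ := h.of_cons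
    exact weight_app_set_lt hs hroot hi hstep
      (weight_lt_of_outAt (hs.of_mem (List.mem_of_getElem? hi)) hstep)

/-- every ground term of T(F) outermost terminates for R17. -/
theorem R17_outermost_terminating :
    ∀ t : Term F17 ℕ, IsGround t → Term.WF arity17 t → OutTerminates R17 t :=
  fun _ _ ht => outTerminates_of_measure (WF arity17) weight
    (fun _ _ hs ⟨_, h⟩ => hs.rewriteAt wf_of_rewriteAt_nil_R17 h.1)
    (fun _ _ hs ⟨_, h⟩ => weight_lt_of_outAt hs h) ht

end TRS
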